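/- If a graphic sequence π is potentially H-graphic, then π has a realization G containing a copy of H on the |V(H)| vertices of largest degree in G. -/

import Mathlib

open SimpleGraph
open scoped Classical

/-- Degree of a vertex. -/
noncomputable def deg {V : Type} (G : SimpleGraph V) (v : V) : ℕ := Nat.card (G.neighborSet v)

/-- Number of vertices of degree exactly 1 (leaves for trees/forests). -/
noncomputable def numLeaves {V : Type} (G : SimpleGraph V) : ℕ := Nat.card {v : V // deg G v = 1}

/-- Number of connected components containing at least one edge. -/
noncomputable def numEdgeComps {V : Type} (G : SimpleGraph V) : ℕ :=
  Nat.card {c : G.ConnectedComponent // ∃ v w : V, G.Adj v w ∧ G.connectedComponentMk v = c}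

/-- Maximum degree. -/
noncomputable def maxDeg {V : Type} (G : SimpleGraph V) : ℕ := sSup (Set.range (deg G))

/-- `G` and `H` pack: a bijection sends edges of `H` to non-edges of `G`. -/
def Packs {V W : Type} (G : SimpleGraph V) (H : SimpleGraph W) : Prop :=
  ∃ f : W ≃ V, ∀ x y : W, H.Adj x y → ¬ G.Adj (f x) (f y)

/-- `G` contains a copy of `H` as a subgraph. -/
def ContainsCopy {V W : Type} (G : SimpleGraph V) (H : SimpleGraph W) : Prop :=
  ∃ f : W ↪ V, ∀ x y : W, H.Adj x y → G.Adj (f x) (f y)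

/-- `G` realizes the degree sequence `π`. -/
def IsRealization {n : ℕ} (G : SimpleGraph (Fin n)) (π : Fin n → ℕ) : Prop :=
  ∀ i, deg G i = π i

/-- `π` is a graphic sequence. -/
def Graphic {n : ℕ} (π : Fin n → ℕ) : Prop :=
  ∃ G : SimpleGraph (Fin n), IsRealization G π

/-- `π` is potentially `H`-graphic. -/
def PotentiallyGraphic {n : ℕ} {W : Type} (π : Fin n → ℕ) (H : SimpleGraph W) : Prop :=
  ∃ G : SimpleGraph (Fin n), IsRealization G π ∧ ContainsCopy G H

/-- The complementary sequence `π̄ = (n-1-d_n, …, n-1-d_1)`. -/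
def compSeq {n : ℕ} (π : Fin n → ℕ) : Fin n → ℕ := fun i => n - 1 - π i.rev

/-- The potential-Ramsey number. -/
noncomputable def rpot {W₁ W₂ : Type} (H₁ : SimpleGraph W₁) (H₂ : SimpleGraph W₂) : ℕ :=
  sInf {N : ℕ | ∀ π : Fin N → ℕ, Antitone π → Graphic π →
    PotentiallyGraphic π H₁ ∨ PotentiallyGraphic (compSeq π) H₂}

/-- The star `K_{1,t-1}` on `t` vertices, centered at vertex `0`. -/
def starGraph (t : ℕ) : SimpleGraph (Fin t) := SimpleGraph.fromRel (fun i _ => (i : ℕ) = 0)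

/-!
Among the realizations of `π` carrying a copy of `H`, take one maximizing the total degree of the
copy's vertices. If a vertex `u` outside the copy had larger degree than a copy vertex `v`, let
`B = N(v) ∖ N[u]` and choose `A ⊆ N(u) ∖ N[v]` with `|A| = |B|`. Toggling every edge between
`{u, v}` and `A ∪ B` keeps all degrees and makes `u` adjacent to every neighbour of `v` other
than `u`, so `u` can take the place of `v` in the copy, increasing the total degree.
-/

open scoped symmDiff

theorem Set.ncard_symmDiff_add_two_mul_ncard_inter {α : Type*} {s t : Set α} (hs : s.Finite)
    (ht : t.Finite) : (s ∆ t).ncard + 2 * (s ∩ t).ncard = s.ncard + t.ncard := by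
  rw [Set.symmDiff_def, Set.ncard_union_eq disjoint_sdiff_sdiff hs.sdiff ht.sdiff,
    ← Set.ncard_inter_add_ncard_sdiff_eq_ncard s t hs,
    ← Set.ncard_inter_add_ncard_sdiff_eq_ncard t s ht, Set.inter_comm t s]
  ring

section Rewiring

variable {V : Type}

lemma deg_eq_ncard (G : SimpleGraph V) (v : V) : deg G v = (G.neighborSet v).ncard :=
  Nat.card_coe_set_eq _

lemma neighborSet_symmDiff (G K : SimpleGraph V) (w : V) :
    (G ∆ K).neighborSet w = G.neighborSet w ∆ K.neighborSet w := by
  ext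
  simp [symmDiff_def]

lemma deg_symmDiff_of_two_mul_ncard_inter [Finite V] {G K : SimpleGraph V} {w : V}
    (h : 2 * (G.neighborSet w ∩ K.neighborSet w).ncard = deg K w) :
    deg (G ∆ K) w = deg G w := by
  have := Set.ncard_symmDiff_add_two_mul_ncard_inter (G.neighborSet w).toFinite
    (K.neighborSet w).toFinite
  rw [deg_eq_ncard, deg_eq_ncard, neighborSet_symmDiff] at *
  omega

def joinPair (u v : V) (T : Set V) : SimpleGraph V :=
  SimpleGraph.fromRel fun p q => (p = u ∨ p = v) ∧ q ∈ T

lemma joinPair_adj {u v : V} {T : Set V} (hu : u ∉ T) (hv : v ∉ T) {p q : V} :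
    (joinPair u v T).Adj p q ↔ (p = u ∨ p = v) ∧ q ∈ T ∨ (q = u ∨ q = v) ∧ p ∈ T := by
  simp only [joinPair, fromRel_adj, and_iff_right_iff_imp]
  rintro (⟨rfl | rfl, hq⟩ | ⟨rfl | rfl, hp⟩) rfl <;> contradiction

lemma neighborSet_joinPair_of_eq_or_eq {u v w : V} {T : Set V} (hu : u ∉ T) (hv : v ∉ T)
    (hw : w = u ∨ w = v) : (joinPair u v T).neighborSet w = T := by
  ext q
  rw [mem_neighborSet, joinPair_adj hu hv]
  rcases hw with rfl | rfl <;> constructor <;> aesop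

lemma neighborSet_joinPair_of_mem {u v w : V} {T : Set V} (hu : u ∉ T) (hv : v ∉ T)
    (hw : w ∈ T) : (joinPair u v T).neighborSet w = {u, v} := by
  ext q
  rw [mem_neighborSet, joinPair_adj hu hv]
  constructor <;> aesop

lemma neighborSet_joinPair_of_notMem {u v w : V} {T : Set V} (hu : u ∉ T) (hv : v ∉ T)
    (hwu : w ≠ u) (hwv : w ≠ v) (hw : w ∉ T) : (joinPair u v T).neighborSet w = ∅ := by
  ext q
  simp [joinPair_adj hu hv, hwu, hwv, hw]

lemma ncard_neighborSet_inter_pair {G : SimpleGraph V} {u v w : V} (hu : G.Adj u w)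
    (hv : ¬G.Adj v w) : (G.neighborSet w ∩ {u, v}).ncard = 1 := by
  rw [Set.ncard_eq_one]
  refine ⟨u, Set.ext fun q => ⟨?_, ?_⟩⟩
  · rintro ⟨h, rfl | rfl⟩
    exacts [rfl, absurd h.symm hv]
  · rintro rfl
    exact ⟨hu.symm, .inl rfl⟩

/-- Each `a ∈ A` trades its edge to `u` for one to `v`, each `b ∈ B` the reverse, and `u`, `v`
each lose and gain `|A| = |B|` edges. -/
theorem deg_symmDiff_joinPair [Finite V] {G : SimpleGraph V} {u v : V} {A B : Set V}
    (huv : u ≠ v) (hA : A ⊆ G.neighborSet u \ G.neighborSet v)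
    (hB : B ⊆ G.neighborSet v \ G.neighborSet u) (hvA : v ∉ A) (huB : u ∉ B)
    (hAB : A.ncard = B.ncard) (w : V) :
    deg (G ∆ joinPair u v (A ∪ B)) w = deg G w := by
  have hu : u ∉ A ∪ B := by
    rintro (h | h)
    exacts [G.notMem_neighborSet_self (hA h).1, huB h]
  have hv : v ∉ A ∪ B := by
    rintro (h | h)
    exacts [hvA h, G.notMem_neighborSet_self (hB h).1]
  have hdisj : Disjoint A B := Set.disjoint_left.mpr fun a ha hb => (hB hb).2 (hA ha).1
  rw [Set.subset_def] at hA hB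
  apply deg_symmDiff_of_two_mul_ncard_inter
  rw [deg_eq_ncard]
  by_cases hwuv : w = u ∨ w = v
  · have hI : (G.neighborSet w ∩ (A ∪ B)).ncard = A.ncard := by
      rcases hwuv with rfl | rfl
      · congr 1; ext q; constructor <;> aesop
      · rw [hAB]; congr 1; ext q; constructor <;> aesop
    rw [neighborSet_joinPair_of_eq_or_eq hu hv hwuv, hI, Set.ncard_union_eq hdisj, ← hAB, two_mul]
  push Not at hwuv
  by_cases hw : w ∈ A ∪ B
  · have hI : (G.neighborSet w ∩ {u, v}).ncard = 1 := by
      rcases hw with hw | hw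
      · exact ncard_neighborSet_inter_pair (hA w hw).1 (hA w hw).2
      · rw [Set.pair_comm]
        exact ncard_neighborSet_inter_pair (hB w hw).1 (hB w hw).2
    rw [neighborSet_joinPair_of_mem hu hv hw, hI, Set.ncard_pair huv]
  · simp [neighborSet_joinPair_of_notMem hu hv hwuv.1 hwuv.2 hw]

lemma ncard_sdiff_neighborSet_le_of_deg_le [Finite V] {G : SimpleGraph V} {u v : V}
    (hdeg : deg G v ≤ deg G u) :
    ((G.neighborSet v \ G.neighborSet u) \ {u}).ncard ≤
      ((G.neighborSet u \ G.neighborSet v) \ {v}).ncard := by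
  rw [deg_eq_ncard, deg_eq_ncard, Set.ncard_le_ncard_iff_ncard_sdiff_le_ncard_sdiff] at hdeg
  by_cases huv : G.Adj u v
  · have hu : u ∈ G.neighborSet v \ G.neighborSet u := ⟨huv.symm, G.notMem_neighborSet_self⟩
    have hv : v ∈ G.neighborSet u \ G.neighborSet v := ⟨huv, G.notMem_neighborSet_self⟩
    rw [Set.ncard_sdiff_singleton_of_mem hu, Set.ncard_sdiff_singleton_of_mem hv]
    omega
  · rwa [Set.sdiff_singleton_eq_self fun h => huv h.1.symm,
      Set.sdiff_singleton_eq_self fun h => huv h.1]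

theorem exists_rewiring_of_deg_le [Finite V] [DecidableEq V] {G : SimpleGraph V} {u v : V}
    (huv : u ≠ v) (hdeg : deg G v ≤ deg G u) :
    ∃ G' : SimpleGraph V, deg G' = deg G ∧
      ∀ p q, p ≠ u → q ≠ u → G.Adj p q → G'.Adj (Equiv.swap v u p) (Equiv.swap v u q) := by
  set B := (G.neighborSet v \ G.neighborSet u) \ {u}
  obtain ⟨A, hA, hAB⟩ := Set.exists_subset_card_eq (ncard_sdiff_neighborSet_le_of_deg_le hdeg)
  have hvA : v ∉ A := fun h => (hA h).2 rfl
  have huB : u ∉ B := fun h => h.2 rfl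
  have huA : u ∉ A := fun h => G.notMem_neighborSet_self (hA h).1.1
  have hvB : v ∉ B := fun h => G.notMem_neighborSet_self h.1.1
  refine ⟨G ∆ joinPair u v (A ∪ B), funext (deg_symmDiff_joinPair huv
    (hA.trans Set.sdiff_subset) Set.sdiff_subset hvA huB hAB), ?_⟩
  have hK : ∀ p q, (joinPair u v (A ∪ B)).Adj p q ↔
      (p = u ∨ p = v) ∧ (q ∈ A ∨ q ∈ B) ∨ (q = u ∨ q = v) ∧ (p ∈ A ∨ p ∈ B) := fun p q =>
    joinPair_adj (by simp [huA, huB]) (by simp [hvA, hvB])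
  have hoff : ∀ p q, p ≠ u → p ≠ v → q ≠ u → q ≠ v → G.Adj p q →
      (G ∆ joinPair u v (A ∪ B)).Adj p q := by
    intro p q hpu hpv hqu hqv hpq
    simp [symmDiff_def, hK, hpq, hpu, hpv, hqu, hqv]
  have hmove : ∀ q, q ≠ u → G.Adj v q → (G ∆ joinPair u v (A ∪ B)).Adj u q := by
    intro q hqu hvq
    by_cases huq : G.Adj u q
    · have hqA : q ∉ A := fun h => (hA h).1.2 hvq
      have hqB : q ∉ B := fun h => h.1.2 huq
      simp [symmDiff_def, hK, huq, hqA, hqB, huA, huB]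
    · have hqB : q ∈ B := ⟨⟨hvq, huq⟩, hqu⟩
      simp [symmDiff_def, hK, huq, hqB]
  intro p q hpu hqu hpq
  rcases eq_or_ne p v with rfl | hpv
  · rw [Equiv.swap_apply_left, Equiv.swap_apply_of_ne_of_ne hpq.ne.symm hqu]
    exact hmove q hqu hpq
  rcases eq_or_ne q v with rfl | hqv
  · rw [Equiv.swap_apply_of_ne_of_ne hpv hpu, Equiv.swap_apply_left]
    exact (hmove p hpu hpq.symm).symm
  rw [Equiv.swap_apply_of_ne_of_ne hpv hpu, Equiv.swap_apply_of_ne_of_ne hqv hqu]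
  exact hoff p q hpu hpv hqu hqv hpq

end Rewiring

theorem gould_jacobson_lehel_general {n : ℕ} {W : Type} (H : SimpleGraph W)
    (π : Fin n → ℕ) (h : PotentiallyGraphic π H) :
    ∃ G : SimpleGraph (Fin n), IsRealization G π ∧
      ∃ f : W ↪ Fin n, (∀ x y : W, H.Adj x y → G.Adj (f x) (f y)) ∧
        ∀ u : Fin n, u ∉ Set.range f → ∀ x : W, deg G u ≤ deg G (f x) := by
  obtain ⟨G₀, hG₀, f₀, hf₀⟩ := h
  have : Fintype W := .ofInjective f₀ f₀.injective
  obtain ⟨⟨G, f⟩, ⟨hG, hf⟩, hmax⟩ := Set.exists_max_image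
    {p : SimpleGraph (Fin n) × (W ↪ Fin n) |
      IsRealization p.1 π ∧ ∀ x y, H.Adj x y → p.1.Adj (p.2 x) (p.2 y)}
    (fun p => ∑ x, π (p.2 x)) (Set.toFinite _) ⟨(G₀, f₀), hG₀, hf₀⟩
  dsimp only at hG hf
  refine ⟨G, hG, f, hf, fun u hu x => le_of_not_gt fun hlt => ?_⟩
  have hfu : ∀ y, f y ≠ u := fun y hy => hu ⟨y, hy⟩
  obtain ⟨G', hdeg, hswap⟩ := exists_rewiring_of_deg_le (hfu x).symm hlt.le
  let f' := f.trans (Equiv.swap (f x) u).toEmbedding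
  have hG' : IsRealization G' π := fun i => (congrFun hdeg i).trans (hG i)
  have hf' : ∀ y z, H.Adj y z → G'.Adj (f' y) (f' z) := fun y z hyz =>
    by simpa [f'] using hswap _ _ (hfu y) (hfu z) (hf y z hyz)
  rw [show deg G = π from funext hG] at hlt
  have hle : ∀ y, π (f y) ≤ π (f' y) := by
    intro y
    rcases eq_or_ne y x with rfl | hyx
    · simpa [f'] using hlt.le
    · simp [f', Equiv.swap_apply_of_ne_of_ne (f.injective.ne hyx) (hfu y)]
  have hlt' : ∑ y, π (f y) < ∑ y, π (f' y) :=
    Finset.sum_lt_sum (fun y _ => hle y) ⟨x, Finset.mem_univ x, by simpa [f'] using hlt⟩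
  exact (hmax (G', f') ⟨hG', hf'⟩).not_gt hlt'

/-- Gould–Jacobson–Lehel: a potentially H-graphic sequence has a realization with a copy of H
on the |V(H)| vertices of largest degree. -/
theorem gould_jacobson_lehel {n : ℕ} {W : Type} [Fintype W] (H : SimpleGraph W)
    (π : Fin n → ℕ) (h : PotentiallyGraphic π H) :
    ∃ G : SimpleGraph (Fin n), IsRealization G π ∧
      ∃ f : W ↪ Fin n, (∀ x y : W, H.Adj x y → G.Adj (f x) (f y)) ∧
        ∀ u : Fin n, u ∉ Set.range f → ∀ x : W, deg G u ≤ deg G (f x) :=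
  gould_jacobson_lehel_general H π h
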